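/- Let T be a bounded operator on ℓ²(V) whose matrix elements vanish unless |w| = |v| ± 1 and satisfy sup_v Σ_w |⟨δ_v, Tδ_w⟩| ≤ C(|v|+1), and let q: V → ℝ satisfy sup_{w: |w|=|v|±1} |q(v) − q(w)| = o(|v|^{−1}) as |v| → ∞. Then the commutator [q, T] (q acting by multiplication) is a compact operator on ℓ²(V). -/

import Mathlib

open scoped InnerProductSpace

/-!
Split `ℓ²(V)` along the spheres `S_r = {v | |v| = r}`. Since `T` only connects neighbouring
spheres, so does `K = [q, T]`, and the block of `K` from `S_s` to a neighbouring `S_r` equals the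
same block of `[q - c, T]` for every constant `c`. Choosing `c = q w₀` with `w₀ ∈ S_s`, the decay
of `q(v) - q(w)` makes `q - c` at most `2ε` on `S_r ∪ S_s` far from the root, so that block has
norm at most `3ε‖T‖`. As each sphere only receives from its two neighbours, these block bounds
add up in `ℓ²` to `‖K (1 - Λ_n)‖ ≤ 6ε‖T‖` for large `n`, while `K Λ_n` has finite rank because
balls are finite: `K` is a norm limit of finite-rank operators.
-/

namespace LevelPropagation

open ContinuousLinearMap

variable {𝕜 V : Type*} [RCLike 𝕜]

local notation "ℓ²(" V ", " 𝕜 ")" => lp (fun _ : V => 𝕜) 2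

lemma norm_le_mul_of_forall_norm_apply_le {f g : ℓ²(V, 𝕜)} {M : ℝ} (hM : 0 ≤ M)
    (h : ∀ v, ‖f v‖ ≤ M * ‖g v‖) : ‖f‖ ≤ M * ‖g‖ := by
  calc ‖f‖ ≤ ‖M • g‖ := lp.norm_mono two_ne_zero fun v => ?_
    _ = M * ‖g‖ := norm_smul_of_nonneg hM g
  simpa [norm_smul, abs_of_nonneg hM] using h v

variable (𝕜) in
noncomputable def indicatorCLM (s : Set V) : ℓ²(V, 𝕜) →L[𝕜] ℓ²(V, 𝕜) :=
  LinearMap.mkContinuous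
    { toFun := fun φ => ⟨s.indicator φ, (lp.memℓp φ).mono' fun _ => norm_indicator_le_norm_self _ _⟩
      map_add' := fun φ ψ => lp.ext (s.indicator_add φ ψ)
      map_smul' := fun c φ => lp.ext (s.indicator_const_smul c φ) }
    1 fun φ => by
      rw [one_mul]
      exact lp.norm_mono two_ne_zero fun _ => norm_indicator_le_norm_self _ _

@[simp]
lemma coe_indicatorCLM (s : Set V) (φ : ℓ²(V, 𝕜)) : ⇑(indicatorCLM 𝕜 s φ) = s.indicator φ :=
  rfl

lemma norm_indicatorCLM_le (s : Set V) : ‖indicatorCLM 𝕜 s‖ ≤ 1 :=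
  LinearMap.mkContinuous_norm_le _ zero_le_one _

lemma indicatorCLM_comp_indicatorCLM (s t : Set V) :
    indicatorCLM 𝕜 s ∘L indicatorCLM 𝕜 t = indicatorCLM 𝕜 (s ∩ t) := by
  ext φ v
  simp [Set.indicator_indicator]

lemma indicatorCLM_empty : indicatorCLM 𝕜 (∅ : Set V) = 0 := by
  ext φ v
  simp

lemma indicatorCLM_compl (s : Set V) : indicatorCLM 𝕜 sᶜ = 1 - indicatorCLM 𝕜 s := by
  ext φ v
  simp [Set.indicator_compl]
  rfl

lemma comp_indicatorCLM_compl (K : ℓ²(V, 𝕜) →L[𝕜] ℓ²(V, 𝕜)) (s : Set V) :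
    K ∘L indicatorCLM 𝕜 sᶜ = K - K ∘L indicatorCLM 𝕜 s := by
  rw [indicatorCLM_compl, comp_sub, one_def, comp_id]

lemma indicatorCLM_eq_sum [DecidableEq V] (s : Finset V) :
    indicatorCLM 𝕜 (s : Set V) =
      ∑ v ∈ s, toSpanSingleton 𝕜 (lp.single 2 v 1) ∘L lp.evalCLM 𝕜 (fun _ : V => 𝕜) 2 v := by
  ext φ w
  rw [coe_indicatorCLM, sum_apply, lp.coeFn_sum, Finset.sum_apply]
  simp [Set.indicator_apply, lp.single_apply, Pi.single_apply, lp.evalCLM]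

lemma isCompactOperator_indicatorCLM [DecidableEq V] {s : Set V} (hs : s.Finite) :
    IsCompactOperator (indicatorCLM 𝕜 s) := by
  rw [← hs.coe_toFinset, indicatorCLM_eq_sum]
  refine Submodule.sum_mem (compactOperator _ ℓ²(V, 𝕜) ℓ²(V, 𝕜)) fun v _ => ?_
  exact (isCompactOperator_of_locallyCompactSpace_dom (lp.evalCLM 𝕜 (fun _ : V => 𝕜) 2 v)).clm_comp
    (toSpanSingleton 𝕜 (lp.single 2 v 1))

lemma hasSum_norm_sq_indicatorCLM_fiber {ι : Type*} (f : V → ι) (φ : ℓ²(V, 𝕜)) :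
    HasSum (fun i => ‖indicatorCLM 𝕜 (f ⁻¹' {i}) φ‖ ^ 2) (‖φ‖ ^ 2) := by
  have hsq (ψ : ℓ²(V, 𝕜)) : HasSum (fun v => ‖ψ v‖ ^ 2) (‖ψ‖ ^ 2) := by
    simpa using lp.hasSum_norm (p := 2) (by norm_num) ψ
  refine ((Equiv.sigmaFiberEquiv f).hasSum_iff.mpr (hsq φ)).sigma fun i => ?_
  have hind : (fun v => ‖indicatorCLM 𝕜 (f ⁻¹' {i}) φ v‖ ^ 2) =
      (f ⁻¹' {i}).indicator fun v => ‖φ v‖ ^ 2 := by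
    ext v
    by_cases h : v ∈ f ⁻¹' {i} <;> simp [h]
  exact hasSum_subtype_iff_indicator.mpr (hind ▸ hsq (indicatorCLM 𝕜 (f ⁻¹' {i}) φ))

lemma hasSum_mul_inner_single [DecidableEq V] (T : ℓ²(V, 𝕜) →L[𝕜] ℓ²(V, 𝕜)) (φ : ℓ²(V, 𝕜)) (v : V) :
    HasSum (fun w => φ w * ⟪lp.single 2 v (1 : 𝕜), T (lp.single 2 w 1)⟫_𝕜) (T φ v) := by
  have hδ (ψ : ℓ²(V, 𝕜)) : ⟪lp.single 2 v (1 : 𝕜), ψ⟫_𝕜 = ψ v := by simp [lp.inner_single_left]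
  have hsingle (w : V) : (lp.single 2 w (φ w) : ℓ²(V, 𝕜)) = φ w • lp.single 2 w (1 : 𝕜) := by
    rw [← lp.single_smul, smul_eq_mul, mul_one]
  simpa [hδ, hsingle] using (lp.hasSum_single ENNReal.ofNat_ne_top φ).mapL
    (innerSL 𝕜 (lp.single 2 v (1 : 𝕜) : ℓ²(V, 𝕜)) ∘L T)

def HasUnitPropagation (lvl : V → ℤ) (K : ℓ²(V, 𝕜) →L[𝕜] ℓ²(V, 𝕜)) : Prop :=
  ∀ r φ, (∀ v, lvl v = r - 1 ∨ lvl v = r + 1 → φ v = 0) → ∀ v, lvl v = r → K φ v = 0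

namespace HasUnitPropagation

variable {lvl : V → ℤ} {K L D : ℓ²(V, 𝕜) →L[𝕜] ℓ²(V, 𝕜)}

lemma sub (hK : HasUnitPropagation lvl K) (hL : HasUnitPropagation lvl L) :
    HasUnitPropagation lvl (K - L) := fun r φ hφ v hv => by
  simp [hK r φ hφ v hv, hL r φ hφ v hv]

lemma comp_left (hK : HasUnitPropagation lvl K) (hD : ∀ φ v, φ v = 0 → D φ v = 0) :
    HasUnitPropagation lvl (D ∘L K) := fun r φ hφ v hv =>
  hD _ v (hK r φ hφ v hv)

lemma comp_right (hK : HasUnitPropagation lvl K) (hD : ∀ φ v, φ v = 0 → D φ v = 0) :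
    HasUnitPropagation lvl (K ∘L D) := fun r φ hφ v hv =>
  hK r (D φ) (fun w hw => hD φ w (hφ w hw)) v hv

lemma indicatorCLM_apply_eq_add (hK : HasUnitPropagation lvl K) (r : ℤ) (φ : ℓ²(V, 𝕜)) :
    indicatorCLM 𝕜 (lvl ⁻¹' {r}) (K φ) =
      indicatorCLM 𝕜 (lvl ⁻¹' {r}) (K (indicatorCLM 𝕜 (lvl ⁻¹' {r - 1}) φ)) +
        indicatorCLM 𝕜 (lvl ⁻¹' {r}) (K (indicatorCLM 𝕜 (lvl ⁻¹' {r + 1}) φ)) := by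
  set ψ := indicatorCLM 𝕜 (lvl ⁻¹' {r - 1}) φ + indicatorCLM 𝕜 (lvl ⁻¹' {r + 1}) φ
  have hψ : ∀ v, lvl v = r - 1 ∨ lvl v = r + 1 → (φ - ψ) v = 0 := by
    rintro v (hv | hv) <;>
      simp only [ψ, lp.coeFn_sub, lp.coeFn_add, Pi.sub_apply, Pi.add_apply, coe_indicatorCLM] <;>
      simp [hv] <;> omega
  have hKψ : indicatorCLM 𝕜 (lvl ⁻¹' {r}) (K (φ - ψ)) = 0 := by
    ext v
    rw [coe_indicatorCLM, lp.coeFn_zero, Pi.zero_apply]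
    exact Set.indicator_apply_eq_zero.mpr fun (hv : v ∈ lvl ⁻¹' {r}) => hK r (φ - ψ) hψ v hv
  rw [← map_add, ← map_add, ← sub_eq_zero, ← map_sub, ← map_sub, hKψ]

theorem norm_le (hK : HasUnitPropagation lvl K) {δ : ℝ}
    (hδ : ∀ r s, s = r - 1 ∨ s = r + 1 →
      ‖indicatorCLM 𝕜 (lvl ⁻¹' {r}) ∘L K ∘L indicatorCLM 𝕜 (lvl ⁻¹' {s})‖ ≤ δ) :
    ‖K‖ ≤ 2 * δ := by
  have hδ₀ : 0 ≤ δ := (norm_nonneg _).trans (hδ 0 1 (Or.inr (zero_add 1).symm))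
  refine opNorm_le_bound _ (by positivity) fun φ => ?_
  set S := fun r : ℤ => indicatorCLM 𝕜 (lvl ⁻¹' {r})
  have hlevel (r s : ℤ) (hrs : s = r - 1 ∨ s = r + 1) : ‖S r (K (S s φ))‖ ≤ δ * ‖S s φ‖ := by
    have hSS : S s (S s φ) = S s φ := by
      rw [← comp_apply, indicatorCLM_comp_indicatorCLM, Set.inter_self]
    simpa [hSS] using (S r ∘L K ∘L S s).le_of_opNorm_le (hδ r s hrs) (S s φ)
  have hsq (r : ℤ) : ‖S r (K φ)‖ ^ 2 ≤ 2 * δ ^ 2 * (‖S (r - 1) φ‖ ^ 2 + ‖S (r + 1) φ‖ ^ 2) := by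
    have h := (norm_add_le _ _).trans
      (add_le_add (hlevel r (r - 1) (Or.inl rfl)) (hlevel r (r + 1) (Or.inr rfl)))
    rw [← hK.indicatorCLM_apply_eq_add] at h
    nlinarith [norm_nonneg (S r (K φ)), sq_nonneg (‖S (r - 1) φ‖ - ‖S (r + 1) φ‖)]
  have hφ := hasSum_norm_sq_indicatorCLM_fiber lvl φ
  have hKφ := hasSum_le hsq (hasSum_norm_sq_indicatorCLM_fiber lvl (K φ))
    ((((Equiv.subRight 1).hasSum_iff.mpr hφ).add ((Equiv.addRight 1).hasSum_iff.mpr hφ)).mul_left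
      (2 * δ ^ 2))
  refine (pow_le_pow_iff_left₀ (norm_nonneg _) (by positivity) two_ne_zero).mp ?_
  linarith

end HasUnitPropagation

lemma hasUnitPropagation_of_inner_single [DecidableEq V] {lvl : V → ℤ} {T : ℓ²(V, 𝕜) →L[𝕜] ℓ²(V, 𝕜)}
    (hT : ∀ v w, lvl w ≠ lvl v - 1 → lvl w ≠ lvl v + 1 →
      ⟪lp.single 2 v (1 : 𝕜), T (lp.single 2 w 1)⟫_𝕜 = 0) :
    HasUnitPropagation lvl T := by
  intro r φ hφ v hv
  refine (hasSum_mul_inner_single T φ v).unique (hasSum_zero.congr_fun fun w => ?_)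
  by_cases hw : lvl w = r - 1 ∨ lvl w = r + 1
  · simp [hφ w hw]
  · rw [not_or, ← hv] at hw
    simp [hT v w hw.1 hw.2]

section Multiplication

variable {a : V → 𝕜} {A : ℓ²(V, 𝕜) →L[𝕜] ℓ²(V, 𝕜)}

lemma sub_smul_one_apply_apply (hA : ∀ φ v, A φ v = a v * φ v) (c : 𝕜) (φ : ℓ²(V, 𝕜)) (v : V) :
    (A - c • 1) φ v = (a v - c) * φ v := by
  simp only [sub_apply, smul_apply, one_apply_eq_self, lp.coeFn_sub, lp.coeFn_smul,
    Pi.sub_apply, Pi.smul_apply, hA, smul_eq_mul, sub_mul]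

lemma norm_indicatorCLM_comp_sub_smul_one_le (hA : ∀ φ v, A φ v = a v * φ v) {s : Set V}
    {c : 𝕜} {ε : ℝ} (hε₀ : 0 ≤ ε) (hε : ∀ v ∈ s, ‖a v - c‖ ≤ ε) :
    ‖indicatorCLM 𝕜 s ∘L (A - c • 1)‖ ≤ ε := by
  refine opNorm_le_bound _ hε₀ fun φ => norm_le_mul_of_forall_norm_apply_le hε₀ fun v => ?_
  rw [comp_apply, coe_indicatorCLM]
  by_cases hv : v ∈ s
  · rw [Set.indicator_of_mem hv, sub_smul_one_apply_apply hA, norm_mul]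
    exact mul_le_mul_of_nonneg_right (hε v hv) (norm_nonneg _)
  · rw [Set.indicator_of_notMem hv, norm_zero]
    positivity

lemma norm_sub_smul_one_comp_indicatorCLM_le (hA : ∀ φ v, A φ v = a v * φ v) {s : Set V}
    {c : 𝕜} {ε : ℝ} (hε₀ : 0 ≤ ε) (hε : ∀ v ∈ s, ‖a v - c‖ ≤ ε) :
    ‖(A - c • 1) ∘L indicatorCLM 𝕜 s‖ ≤ ε := by
  refine opNorm_le_bound _ hε₀ fun φ => norm_le_mul_of_forall_norm_apply_le hε₀ fun v => ?_
  rw [comp_apply, sub_smul_one_apply_apply hA, coe_indicatorCLM, norm_mul]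
  by_cases hv : v ∈ s
  · rw [Set.indicator_of_mem hv]
    exact mul_le_mul_of_nonneg_right (hε v hv) (norm_nonneg _)
  · rw [Set.indicator_of_notMem hv, norm_zero, mul_zero]
    positivity

theorem norm_indicatorCLM_comp_commutator_comp_indicatorCLM_le
    (hA : ∀ φ v, A φ v = a v * φ v) (T : ℓ²(V, 𝕜) →L[𝕜] ℓ²(V, 𝕜)) {s t : Set V} {ε : ℝ}
    (hε₀ : 0 ≤ ε) (hε : ∀ v ∈ s, ∀ w ∈ t, ‖a v - a w‖ ≤ ε) :
    ‖indicatorCLM 𝕜 s ∘L (A ∘L T - T ∘L A) ∘L indicatorCLM 𝕜 t‖ ≤ 3 * ε * ‖T‖ := by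
  rcases t.eq_empty_or_nonempty with rfl | ⟨w₀, hw₀⟩
  · simpa [indicatorCLM_empty] using by positivity
  rcases s.eq_empty_or_nonempty with rfl | ⟨u₀, hu₀⟩
  · simpa [indicatorCLM_empty] using by positivity
  have hs (v) (hv : v ∈ s) : ‖a v - a w₀‖ ≤ ε := hε v hv w₀ hw₀
  have ht (w) (hw : w ∈ t) : ‖a w - a w₀‖ ≤ 2 * ε :=
    calc ‖a w - a w₀‖ ≤ ‖a w - a u₀‖ + ‖a u₀ - a w₀‖ := norm_sub_le_norm_sub_add_norm_sub _ _ _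
      _ ≤ ε + ε := add_le_add (norm_sub_rev (a w) _ ▸ hε u₀ hu₀ w hw) (hs u₀ hu₀)
      _ = 2 * ε := by ring
  -- `A` may be replaced by `A - a w₀`, which is small on `s` and on `t`
  have hsplit : indicatorCLM 𝕜 s ∘L (A ∘L T - T ∘L A) ∘L indicatorCLM 𝕜 t =
      (indicatorCLM 𝕜 s ∘L (A - a w₀ • 1)) ∘L T ∘L indicatorCLM 𝕜 t -
        indicatorCLM 𝕜 s ∘L T ∘L ((A - a w₀ • 1) ∘L indicatorCLM 𝕜 t) := by
    simp only [comp_sub, sub_comp, comp_smul, smul_comp, comp_assoc, one_def, comp_id, id_comp]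
    abel
  rw [hsplit]
  have h₁ : ‖(indicatorCLM 𝕜 s ∘L (A - a w₀ • 1)) ∘L T ∘L indicatorCLM 𝕜 t‖ ≤ ε * (‖T‖ * 1) :=
    (opNorm_comp_le _ _).trans <| mul_le_mul (norm_indicatorCLM_comp_sub_smul_one_le hA hε₀ hs)
      ((opNorm_comp_le _ _).trans
        (mul_le_mul_of_nonneg_left (norm_indicatorCLM_le t) (norm_nonneg _))) (by positivity) hε₀
  have h₂ : ‖indicatorCLM 𝕜 s ∘L T ∘L ((A - a w₀ • 1) ∘L indicatorCLM 𝕜 t)‖ ≤ 1 * (‖T‖ * (2 * ε)) :=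
    (opNorm_comp_le _ _).trans <| mul_le_mul (norm_indicatorCLM_le s)
      ((opNorm_comp_le _ _).trans (mul_le_mul_of_nonneg_left
        (norm_sub_smul_one_comp_indicatorCLM_le hA (by positivity) ht) (norm_nonneg _)))
      (by positivity) zero_le_one
  linarith [norm_sub_le ((indicatorCLM 𝕜 s ∘L (A - a w₀ • 1)) ∘L T ∘L indicatorCLM 𝕜 t)
    (indicatorCLM 𝕜 s ∘L T ∘L ((A - a w₀ • 1) ∘L indicatorCLM 𝕜 t))]

end Multiplication

theorem norm_commutator_comp_indicatorCLM_le {lvl : V → ℤ} {a : V → 𝕜}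
    {A T : ℓ²(V, 𝕜) →L[𝕜] ℓ²(V, 𝕜)} (hA : ∀ φ v, A φ v = a v * φ v) (hT : HasUnitPropagation lvl T)
    (t : Set V) {ε : ℝ} (hε₀ : 0 ≤ ε)
    (ha : ∀ v, ∀ w ∈ t, lvl v = lvl w - 1 ∨ lvl v = lvl w + 1 → ‖a v - a w‖ ≤ ε) :
    ‖(A ∘L T - T ∘L A) ∘L indicatorCLM 𝕜 t‖ ≤ 6 * ε * ‖T‖ := by
  have hA₀ (φ : ℓ²(V, 𝕜)) (v : V) (h : φ v = 0) : A φ v = 0 := by rw [hA, h, mul_zero]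
  have hK : HasUnitPropagation lvl ((A ∘L T - T ∘L A) ∘L indicatorCLM 𝕜 t) :=
    ((hT.comp_left hA₀).sub (hT.comp_right hA₀)).comp_right fun φ v h => by simp [h]
  refine (hK.norm_le (δ := 3 * ε * ‖T‖) fun r s hrs => ?_).trans_eq (by ring)
  rw [comp_assoc, indicatorCLM_comp_indicatorCLM]
  refine norm_indicatorCLM_comp_commutator_comp_indicatorCLM_le hA T hε₀ fun v hv w hw => ?_
  have hv : lvl v = r := hv
  have hw' : lvl w = s := hw.2
  exact ha v w hw.1 (by omega)

end LevelPropagation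

open Filter Topology LevelPropagation

theorem commutator_q_T_compact
    (V : Type*) [DecidableEq V]
    (len : V → ℕ)  -- distance to the root
    (hfin : ∀ r : ℕ, {v : V | len v = r}.Finite)
    (T : lp (fun _ : V => ℂ) 2 →L[ℂ] lp (fun _ : V => ℂ) 2)
    (hvanish : ∀ v w : V, len w ≠ len v + 1 → len v ≠ len w + 1 →
      ⟪lp.single 2 v (1 : ℂ), T (lp.single 2 w (1 : ℂ))⟫_ℂ = 0)
    (q : V → ℝ)
    (Mq : lp (fun _ : V => ℂ) 2 →L[ℂ] lp (fun _ : V => ℂ) 2)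
    (hMq : ∀ (φ : lp (fun _ : V => ℂ) 2) (v : V), Mq φ v = (q v : ℂ) * φ v)
    (hq : ∀ ε > (0 : ℝ), ∃ R : ℕ, ∀ v w : V, R ≤ len v →
      (len w = len v + 1 ∨ len v = len w + 1) →
      (len v : ℝ) * |q v - q w| < ε) :
    IsCompactOperator ⇑(Mq ∘L T - T ∘L Mq) := by
  set K := Mq ∘L T - T ∘L Mq
  set ball : ℕ → Set V := fun n => len ⁻¹' Set.Iic n
  have hT : HasUnitPropagation (fun v => (len v : ℤ)) T :=
    hasUnitPropagation_of_inner_single fun v w h₁ h₂ => hvanish v w (by omega) (by omega)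
  have htail : Tendsto (fun n => K ∘L indicatorCLM ℂ (ball n)ᶜ) atTop (𝓝 0) := by
    refine NormedAddGroup.tendsto_nhds_zero.2 fun ε hε => ?_
    have hη : 0 < ε / (6 * ‖T‖ + 1) := by positivity
    obtain ⟨R, hR⟩ := hq _ hη
    filter_upwards [eventually_ge_atTop R] with n hn
    refine (norm_commutator_comp_indicatorCLM_le hMq hT _ hη.le fun v w hw hvw => ?_).trans_lt ?_
    · have hw : n < len w := by simpa [ball] using hw
      have hqwv := hR w v (by omega) (by omega)
      have hlen : (1 : ℝ) ≤ len w := by exact_mod_cast (by omega : 1 ≤ len w)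
      rw [← Complex.ofReal_sub, Complex.norm_real, Real.norm_eq_abs, abs_sub_comm]
      nlinarith [abs_nonneg (q w - q v)]
    · calc 6 * (ε / (6 * ‖T‖ + 1)) * ‖T‖ = ε * (6 * ‖T‖ / (6 * ‖T‖ + 1)) := by ring
        _ < ε := mul_lt_of_lt_one_right hε ((div_lt_one (by positivity)).2 (lt_add_one _))
  refine isCompactOperator_of_tendsto (l := atTop) (F := fun n => K ∘L indicatorCLM ℂ (ball n)) ?_
    (Eventually.of_forall fun n => (isCompactOperator_indicatorCLM
      ((Set.finite_Iic n).preimage' fun r _ => hfin r)).clm_comp K)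
  simpa [comp_indicatorCLM_compl] using tendsto_const_nhds (x := K) |>.sub htail
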